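/- Hölder regularity of the fractional difference: let 0 < α < β ≤ 1 and h > 0. If u : ℤ → ℝ satisfies |u(j) − u(m)| ≤ M h^β |j−m|^β for all j, m, then there is a constant C depending only on α (not on h, u) with |(δ_right)^α u(j) − (δ_right)^α u(m)| ≤ C M h^{β−α} |j−m|^{β−α} for all j ≠ m. -/

import Mathlib

open Real

/-- The generalized binomial coefficient `(α choose m) = α(α−1)⋯(α−m+1)/m!`. -/
noncomputable def rchoose (α : ℝ) (m : ℕ) : ℝ :=
  (∏ i ∈ Finset.range m, (α - i)) / (m.factorial : ℝ)

/-- The kernel `Λ^α(m) = (−1)^m (α choose m)`. -/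
noncomputable def Lam (α : ℝ) (m : ℕ) : ℝ := (-1) ^ m * rchoose α m

/-- The fractional discrete derivative on the mesh `ℤ_h`:
`(δ_right)^α u(n) = h^{-α} ∑_{m=0}^∞ Λ^α(m) u(n+m)`. -/
noncomputable def deltaRightPow (α h : ℝ) (u : ℤ → ℝ) (n : ℤ) : ℝ :=
  h ^ (-α) * ∑' m : ℕ, Lam α m * u (n + (m : ℤ))

/-!
Since `∑ₘ Λ^α(m) = 0`, the difference `δ^α u(j) - δ^α u(k)` equals `h^{-α} ∑ₘ Λ^α(m) (v(m) - v(0))`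
with `v(m) = u(j+m) - u(k+m)`, and the Hölder bound gives `|v(m) - v(0)| ≤ 2 M h^β min(m, N)^β`
where `N = |j - k|`. The partial sums of the kernel are `∑_{m ≤ N} Λ^α(m) = ∏_{i < N} (1 - α/(i+1))`,
which is at most `exp(-α H_N) ≤ (N+1)^{-α}`; hence `|Λ^α(m)| ≤ α m^{-1-α}`, and since `Λ^α(m) ≤ 0` for
`m ≥ 1` the tail `∑_{m > N} |Λ^α(m)|` is that same product. Splitting the series at `N`, the head is
at most `2 M h^β α ∑_{m ≤ N} m^{β-α-1} ≤ 2 M h^β α N^{β-α} / (β - α)` (concavity of `x^{β-α}`) and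
the tail at most `2 M h^β N^β N^{-α}`.
-/

open Finset

lemma abs_tsum_sub_tsum_le {ι : Type*} {f g : ι → ℝ} (hfg : Summable fun i ↦ f i - g i) :
    |∑' i, f i - ∑' i, g i| ≤ |∑' i, (f i - g i)| := by
  by_cases hf : Summable f
  · rw [hf.tsum_sub (by simpa using hf.sub hfg)]
  · have hg : ¬ Summable g := fun hg ↦ hf (by simpa using hg.add hfg)
    simp [tsum_eq_zero_of_not_summable hf, tsum_eq_zero_of_not_summable hg]

lemma mul_rpow_sub_one_le_sub_rpow {γ x : ℝ} (hγ₀ : 0 ≤ γ) (hγ : γ ≤ 1) (hx : 0 ≤ x) :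
    γ * (x + 1) ^ (γ - 1) ≤ (x + 1) ^ γ - x ^ γ := by
  have h := (Real.concaveOn_rpow hγ₀ hγ).le_slope_of_hasDerivAt (Set.mem_Ici.2 hx)
    (Set.mem_Ici.2 (by linarith : 0 ≤ x + 1)) (lt_add_one x)
    (Real.hasDerivAt_rpow_const (Or.inl (by linarith : x + 1 ≠ 0)))
  simpa [slope_def_field] using h

lemma sum_range_rpow_sub_one_le {γ : ℝ} (hγ₀ : 0 < γ) (hγ : γ ≤ 1) (N : ℕ) :
    ∑ n ∈ range N, ((n : ℝ) + 1) ^ (γ - 1) ≤ (N : ℝ) ^ γ / γ := by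
  rw [le_div_iff₀ hγ₀, sum_mul]
  calc ∑ n ∈ range N, ((n : ℝ) + 1) ^ (γ - 1) * γ
      ≤ ∑ n ∈ range N, (((n + 1 : ℕ) : ℝ) ^ γ - (n : ℝ) ^ γ) := by
        gcongr with n
        push_cast
        linarith [mul_rpow_sub_one_le_sub_rpow hγ₀.le hγ n.cast_nonneg]
    _ = (N : ℝ) ^ γ := by
        rw [sum_range_sub (fun n : ℕ ↦ (n : ℝ) ^ γ)]
        simp [Real.zero_rpow hγ₀.ne']

noncomputable def lamPartialSum (α : ℝ) (N : ℕ) : ℝ := ∏ i ∈ range N, (1 - α / (i + 1))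

lemma Lam_zero (α : ℝ) : Lam α 0 = 1 := by simp [Lam, rchoose]

lemma Lam_succ (α : ℝ) (n : ℕ) : Lam α (n + 1) = Lam α n * ((n - α) / (n + 1)) := by
  simp only [Lam, rchoose, pow_succ, prod_range_succ, Nat.factorial_succ, Nat.cast_mul]
  field_simp
  push_cast
  ring

lemma Lam_succ_eq (α : ℝ) (n : ℕ) : Lam α (n + 1) = -(α / (n + 1)) * lamPartialSum α n := by
  induction n with
  | zero => simp [Lam_succ, Lam_zero, lamPartialSum]
  | succ n ih =>
    rw [Lam_succ, ih, lamPartialSum, lamPartialSum, prod_range_succ]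
    push_cast
    field_simp

lemma sum_range_succ_Lam (α : ℝ) (N : ℕ) : ∑ m ∈ range (N + 1), Lam α m = lamPartialSum α N := by
  induction N with
  | zero => simp [Lam_zero, lamPartialSum]
  | succ N ih =>
    rw [sum_range_succ, ih, Lam_succ_eq, lamPartialSum, lamPartialSum, prod_range_succ]
    ring

section
variable {α : ℝ}

lemma one_sub_div_natCast_add_one_nonneg (hα : α ≤ 1) (i : ℕ) : 0 ≤ 1 - α / ((i : ℝ) + 1) :=
  sub_nonneg.2 <| div_le_one_of_le₀ (by linarith [i.cast_nonneg (α := ℝ)]) (by positivity)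

lemma lamPartialSum_nonneg (hα : α ≤ 1) (N : ℕ) : 0 ≤ lamPartialSum α N :=
  prod_nonneg fun i _ ↦ one_sub_div_natCast_add_one_nonneg hα i

lemma lamPartialSum_le_rpow (hα₀ : 0 ≤ α) (hα : α ≤ 1) (N : ℕ) :
    lamPartialSum α N ≤ ((N : ℝ) + 1) ^ (-α) := by
  have hlog : Real.log ((N : ℝ) + 1) ≤ ∑ i ∈ range N, ((i : ℝ) + 1)⁻¹ := by
    simpa [harmonic] using log_add_one_le_harmonic N
  calc lamPartialSum α N ≤ ∏ i ∈ range N, Real.exp (-(α / (i + 1))) :=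
        prod_le_prod (fun i _ ↦ one_sub_div_natCast_add_one_nonneg hα i)
          fun i _ ↦ Real.one_sub_le_exp_neg _
    _ = Real.exp (-(α * ∑ i ∈ range N, ((i : ℝ) + 1)⁻¹)) := by
        rw [← Real.exp_sum, mul_sum]; simp [div_eq_mul_inv]
    _ ≤ Real.exp (-(α * Real.log ((N : ℝ) + 1))) := by gcongr
    _ = ((N : ℝ) + 1) ^ (-α) := by rw [Real.rpow_def_of_pos (by positivity)]; ring_nf

lemma Lam_succ_nonpos (hα₀ : 0 ≤ α) (hα : α ≤ 1) (n : ℕ) : Lam α (n + 1) ≤ 0 := by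
  rw [Lam_succ_eq, neg_mul]
  exact neg_nonpos.2 (mul_nonneg (by positivity) (lamPartialSum_nonneg hα n))

lemma abs_Lam_succ_le (hα₀ : 0 ≤ α) (hα : α ≤ 1) (n : ℕ) :
    |Lam α (n + 1)| ≤ α * ((n : ℝ) + 1) ^ (-(1 + α)) := by
  have hn : (0 : ℝ) < n + 1 := by positivity
  rw [Lam_succ_eq, abs_mul, abs_neg, abs_of_nonneg (by positivity),
    abs_of_nonneg (lamPartialSum_nonneg hα n), neg_add, Real.rpow_add hn, Real.rpow_neg_one,
    div_eq_mul_inv, mul_assoc]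
  gcongr
  exact lamPartialSum_le_rpow hα₀ hα n

lemma summable_Lam (hα₀ : 0 < α) (hα : α ≤ 1) : Summable (Lam α) := by
  rw [← summable_nat_add_iff 1]
  refine Summable.of_norm_bounded ?_ fun n ↦ abs_Lam_succ_le hα₀.le hα n
  refine Summable.mul_left _ ?_
  exact_mod_cast (summable_nat_add_iff 1).2 (Real.summable_nat_rpow.2 (by linarith))

lemma hasSum_Lam (hα₀ : 0 < α) (hα : α ≤ 1) : HasSum (Lam α) 0 := by
  rw [(summable_Lam hα₀ hα).hasSum_iff_tendsto_nat, ← Filter.tendsto_add_atTop_iff_nat 1]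
  simp only [sum_range_succ_Lam]
  refine squeeze_zero (lamPartialSum_nonneg hα) (lamPartialSum_le_rpow hα₀.le hα) ?_
  exact_mod_cast (tendsto_rpow_neg_atTop hα₀).comp
    (tendsto_natCast_atTop_atTop.comp (Filter.tendsto_add_atTop_nat 1))

lemma hasSum_abs_Lam_tail (hα₀ : 0 < α) (hα : α ≤ 1) (N : ℕ) :
    HasSum (fun n ↦ |Lam α (n + N + 1)|) (lamPartialSum α N) := by
  have h := (hasSum_nat_add_iff' (N + 1)).2 (hasSum_Lam hα₀ hα)
  rw [sum_range_succ_Lam, zero_sub] at h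
  simp_rw [abs_of_nonpos (Lam_succ_nonpos hα₀.le hα _)]
  simpa only [add_assoc, neg_neg] using h.neg

lemma sum_range_abs_Lam_succ_mul_rpow_le {β : ℝ} (hα₀ : 0 ≤ α) (hα : α ≤ 1) (hαβ : α < β)
    (hβ : β ≤ α + 1) (N : ℕ) :
    ∑ n ∈ range N, |Lam α (n + 1)| * ((n : ℝ) + 1) ^ β ≤ α / (β - α) * (N : ℝ) ^ (β - α) := by
  calc ∑ n ∈ range N, |Lam α (n + 1)| * ((n : ℝ) + 1) ^ β
      ≤ ∑ n ∈ range N, α * ((n : ℝ) + 1) ^ (β - α - 1) := by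
        refine sum_le_sum fun n _ ↦ ?_
        have hn : (0 : ℝ) < n + 1 := by positivity
        calc |Lam α (n + 1)| * ((n : ℝ) + 1) ^ β
            ≤ α * ((n : ℝ) + 1) ^ (-(1 + α)) * ((n : ℝ) + 1) ^ β := by
              gcongr; exact abs_Lam_succ_le hα₀ hα n
          _ = α * ((n : ℝ) + 1) ^ (β - α - 1) := by
              rw [mul_assoc, ← Real.rpow_add hn]; ring_nf
    _ ≤ α * ((N : ℝ) ^ (β - α) / (β - α)) := by
        rw [← mul_sum]
        gcongr
        exact sum_range_rpow_sub_one_le (by linarith) (by linarith) N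
    _ = α / (β - α) * (N : ℝ) ^ (β - α) := by ring

lemma summable_Lam_mul_of_abs_le (hα₀ : 0 < α) (hα : α ≤ 1) {v : ℕ → ℝ} {B : ℝ}
    (hv : ∀ n, |v n| ≤ B) : Summable fun n ↦ Lam α n * v n :=
  Summable.of_norm_bounded ((summable_Lam hα₀ hα).abs.mul_right B) fun n ↦ by
    rw [Real.norm_eq_abs, abs_mul]
    exact mul_le_mul_of_nonneg_left (hv n) (abs_nonneg _)

lemma abs_tsum_Lam_tail_mul_le (hα₀ : 0 < α) (hα : α ≤ 1) (N : ℕ) {w : ℕ → ℝ} {B : ℝ}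
    (hw : ∀ n, |w n| ≤ B) : |∑' n, Lam α (n + N + 1) * w n| ≤ lamPartialSum α N * B := by
  rw [← Real.norm_eq_abs]
  refine tsum_of_norm_bounded ((hasSum_abs_Lam_tail hα₀ hα N).mul_right B) fun n ↦ ?_
  rw [Real.norm_eq_abs, abs_mul]
  exact mul_le_mul_of_nonneg_left (hw n) (abs_nonneg _)

lemma abs_tsum_Lam_mul_le {β A : ℝ} (hα₀ : 0 < α) (hα : α ≤ 1) (hαβ : α < β) (hβ : β ≤ α + 1)
    {v : ℕ → ℝ} {N : ℕ} (hN : N ≠ 0) (h_near : ∀ n : ℕ, |v n - v 0| ≤ A * (n : ℝ) ^ β)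
    (h_far : ∀ n, |v n - v 0| ≤ A * (N : ℝ) ^ β) :
    |∑' n, Lam α n * v n| ≤ (α / (β - α) + 1) * A * (N : ℝ) ^ (β - α) := by
  have hA : 0 ≤ A := by simpa using (abs_nonneg _).trans (h_near 1)
  have hN₀ : (0 : ℝ) < N := by positivity
  have hw := summable_Lam_mul_of_abs_le hα₀ hα h_far
  have h_split : ∑' n, Lam α n * v n = ∑ n ∈ range N, Lam α (n + 1) * (v (n + 1) - v 0) +
      ∑' n, Lam α (n + N + 1) * (v (n + N + 1) - v 0) := by
    have h := hw.hasSum.add ((hasSum_Lam hα₀ hα).mul_right (v 0))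
    simp only [← mul_add, sub_add_cancel, zero_mul, add_zero] at h
    rw [h.tsum_eq, ← hw.sum_add_tsum_nat_add (N + 1), sum_range_succ']
    simp [add_assoc]
  have h_head : |∑ n ∈ range N, Lam α (n + 1) * (v (n + 1) - v 0)| ≤
      A * (α / (β - α) * (N : ℝ) ^ (β - α)) :=
    calc _ ≤ ∑ n ∈ range N, |Lam α (n + 1)| * (A * ((n : ℝ) + 1) ^ β) := by
          refine (abs_sum_le_sum_abs _ _).trans (sum_le_sum fun n _ ↦ ?_)
          rw [abs_mul]
          gcongr
          exact_mod_cast h_near (n + 1)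
      _ ≤ A * (α / (β - α) * (N : ℝ) ^ (β - α)) := by
          simp_rw [mul_left_comm _ A, ← mul_sum]
          gcongr
          exact sum_range_abs_Lam_succ_mul_rpow_le hα₀.le hα hαβ hβ N
  have h_tail : |∑' n, Lam α (n + N + 1) * (v (n + N + 1) - v 0)| ≤ A * (N : ℝ) ^ (β - α) :=
    calc _ ≤ lamPartialSum α N * (A * (N : ℝ) ^ β) :=
          abs_tsum_Lam_tail_mul_le hα₀ hα N fun n ↦ h_far _
      _ ≤ (N : ℝ) ^ (-α) * (A * (N : ℝ) ^ β) := by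
          gcongr
          exact (lamPartialSum_le_rpow hα₀.le hα N).trans
            (Real.rpow_le_rpow_of_nonpos hN₀ (by linarith) (by linarith))
      _ = A * (N : ℝ) ^ (β - α) := by rw [sub_eq_neg_add, Real.rpow_add hN₀]; ring
  rw [h_split]
  calc _ ≤ _ := abs_add_le _ _
    _ ≤ _ := add_le_add h_head h_tail
    _ = _ := by ring

end

/-- For `β > α` the series defining `δ^α u` need not converge absolutely, so each `tsum` may take its
junk value `0`; only the difference series is summable. -/
lemma abs_deltaRightPow_sub_le {α h : ℝ} (hh : 0 < h) {u : ℤ → ℝ} {j k : ℤ}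
    (hsum : Summable fun n : ℕ ↦ Lam α n * (u (j + n) - u (k + n))) :
    |deltaRightPow α h u j - deltaRightPow α h u k| ≤
      h ^ (-α) * |∑' n : ℕ, Lam α n * (u (j + n) - u (k + n))| := by
  rw [deltaRightPow, deltaRightPow, ← mul_sub, abs_mul, abs_of_pos (by positivity)]
  simp only [mul_sub] at hsum ⊢
  exact mul_le_mul_of_nonneg_left (abs_tsum_sub_tsum_le hsum) (by positivity)

lemma abs_shift_sub_shift_le_of_holder {β K : ℝ} {u : ℤ → ℝ}
    (hu : ∀ a b : ℤ, |u a - u b| ≤ K * |(a : ℝ) - b| ^ β) (j k : ℤ) (n : ℕ) :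
    |u (j + n) - u (k + n) - (u j - u k)| ≤ 2 * K * (n : ℝ) ^ β := by
  have hj := hu (j + n) j
  have hk := hu (k + n) k
  push_cast at hj hk
  simp only [add_sub_cancel_left, Nat.abs_cast] at hj hk
  calc _ = |(u (j + n) - u j) - (u (k + n) - u k)| := by congr 1; ring
    _ ≤ _ := (abs_sub _ _).trans (by linarith)

/-- Hölder regularity: if `u` is in the discrete Hölder class `C_h^{0,β}` with seminorm `M`,
then `(δ_right)^α u` is in `C_h^{0,β−α}`, with constant depending only on `α` (and `β`). -/
theorem holder_regularity (α β : ℝ) (hα : 0 < α) (hαβ : α < β) (hβ : β ≤ 1) :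
    ∃ C : ℝ, 0 < C ∧ ∀ h : ℝ, 0 < h → ∀ M : ℝ, ∀ u : ℤ → ℝ,
      (∀ j m : ℤ, |u j - u m| ≤ M * h ^ β * |(j : ℝ) - (m : ℝ)| ^ β) →
      ∀ j m : ℤ, j ≠ m →
        |deltaRightPow α h u j - deltaRightPow α h u m| ≤
          C * M * h ^ (β - α) * |(j : ℝ) - (m : ℝ)| ^ (β - α) := by
  have hγ : 0 < β - α := sub_pos.2 hαβ
  refine ⟨2 * (α / (β - α) + 1), by positivity, fun h hh M u hu j k hjk ↦ ?_⟩
  obtain ⟨N, hN, hjkN⟩ : ∃ N : ℕ, N ≠ 0 ∧ |(j : ℝ) - k| = N :=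
    ⟨(j - k).natAbs, by omega, by push_cast [Nat.cast_natAbs]; rfl⟩
  set v : ℕ → ℝ := fun n ↦ u (j + n) - u (k + n)
  have h_far : ∀ n, |v n| ≤ M * h ^ β * (N : ℝ) ^ β := fun n ↦ by
    simpa [hjkN] using hu (j + n) (k + n)
  have h_far' : ∀ n, |v n - v 0| ≤ 2 * (M * h ^ β) * (N : ℝ) ^ β := fun n ↦
    (abs_sub _ _).trans (by linarith [h_far n, h_far 0])
  have h_near : ∀ n : ℕ, |v n - v 0| ≤ 2 * (M * h ^ β) * (n : ℝ) ^ β := fun n ↦ by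
    simpa [v] using abs_shift_sub_shift_le_of_holder hu j k n
  calc _ ≤ h ^ (-α) * |∑' n, Lam α n * v n| :=
        abs_deltaRightPow_sub_le hh (summable_Lam_mul_of_abs_le hα (by linarith) h_far)
    _ ≤ h ^ (-α) * ((α / (β - α) + 1) * (2 * (M * h ^ β)) * (N : ℝ) ^ (β - α)) := by
        gcongr
        exact abs_tsum_Lam_mul_le hα (by linarith) hαβ (by linarith) hN h_near h_far'
    _ = 2 * (α / (β - α) + 1) * M * h ^ (β - α) * |(j : ℝ) - k| ^ (β - α) := by
        rw [hjkN, sub_eq_neg_add β α, Real.rpow_add hh]; ring
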